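/- arXiv:2008.08397 — 2 statements merged into one kernel-verified Lean document; each statement's English description precedes it below -/
import Mathlib

section
/- Equivalence of Stein operators in expectation: under the null, E[Δ ω(T) λ_C(T)] = E[(1−Δ) ω(T) λ_0(T)], where λ_C = f_C/S_C and λ_0 = f_0/S_0. -/
/-!
With `T = min X C`, independence and Fubini give
`E[Δ ω(T) λ_C(T)] = ∫ ω(x) λ_C(x) P(C ≥ x) dF₀(x)`, and since `C` has no atoms
`λ_C(x) P(C ≥ x) = λ_C(x) S_C(x) = f_C(x)`, so the left side is `∫ ω f₀ f_C dx`.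
Symmetrically `E[(1 - Δ) ω(T) λ₀(T)] = ∫ ω(c) λ₀(c) P(X > c) dF_C(c) = ∫ ω f_C f₀ dc`.
-/

open MeasureTheory Set ProbabilityTheory

section Independence

variable {Ω α β : Type*} {mΩ : MeasurableSpace Ω} [MeasurableSpace α] [MeasurableSpace β]
  {μ : Measure Ω} [IsFiniteMeasure μ] {X : Ω → α} {Y : Ω → β}

theorem ProbabilityTheory.IndepFun.integral_comp_eq_integral_integral (hX : Measurable X)
    (hY : Measurable Y) (hXY : IndepFun X Y μ) {g : α × β → ℝ} (hg : Measurable g)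
    (hint : Integrable (fun ω => g (X ω, Y ω)) μ) :
    ∫ ω, g (X ω, Y ω) ∂μ = ∫ x, ∫ y, g (x, y) ∂(μ.map Y) ∂(μ.map X) := by
  have hXYm : Measurable fun ω => (X ω, Y ω) := hX.prodMk hY
  have hmap := (indepFun_iff_map_prod_eq_prod_map_map hX.aemeasurable hY.aemeasurable).mp hXY
  have hint_prod : Integrable g ((μ.map X).prod (μ.map Y)) :=
    hmap ▸ (integrable_map_measure hg.aestronglyMeasurable hXYm.aemeasurable).mpr hint
  rw [← integral_prod _ hint_prod, ← hmap, integral_map hXYm.aemeasurable hg.aestronglyMeasurable]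

theorem ProbabilityTheory.IndepFun.integral_indicator_comp_fst (hX : Measurable X)
    (hY : Measurable Y) (hXY : IndepFun X Y μ) {s : Set (α × β)} (hs : MeasurableSet s)
    {g : α → ℝ} (hg : Measurable g)
    (hint : Integrable (fun ω => s.indicator (fun p => g p.1) (X ω, Y ω)) μ) :
    ∫ ω, s.indicator (fun p => g p.1) (X ω, Y ω) ∂μ
      = ∫ x, g x * μ.real {ω | (x, Y ω) ∈ s} ∂(μ.map X) := by
  have hgs : Measurable (s.indicator fun p : α × β => g p.1) :=
    (hg.comp measurable_fst).indicator hs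
  rw [hXY.integral_comp_eq_integral_integral hX hY hgs hint]
  refine integral_congr_ae (ae_of_all _ fun x => ?_)
  dsimp only
  have hslice : (fun y => s.indicator (fun p => g p.1) (x, y))
      = (Prod.mk x ⁻¹' s).indicator (fun _ => g x) := rfl
  rw [hslice, integral_indicator_const _ (measurable_prodMk_left hs),
    map_measureReal_apply hY (measurable_prodMk_left hs), smul_eq_mul, mul_comm]
  rfl

end Independence

theorem integral_withDensity_ofReal {α : Type*} [MeasurableSpace α] {μ : Measure α}
    {f : α → ℝ} (hf : Measurable f) (hf_nonneg : ∀ x, 0 ≤ f x) (g : α → ℝ) :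
    ∫ x, g x ∂μ.withDensity (fun x => ENNReal.ofReal (f x)) = ∫ x, f x * g x ∂μ := by
  rw [integral_withDensity_eq_integral_toReal_smul hf.ennreal_ofReal
    (ae_of_all _ fun _ => ENNReal.ofReal_lt_top)]
  simp only [ENNReal.toReal_ofReal (hf_nonneg _), smul_eq_mul]

section Survival

variable {Ω : Type*} {mΩ : MeasurableSpace Ω} {μ : Measure Ω}

theorem antitone_measureReal_lt [IsFiniteMeasure μ] (Y : Ω → ℝ) :
    Antitone fun s => μ.real {ω | s < Y ω} :=
  fun _ _ hab => measureReal_mono fun _ hω => hab.trans_lt hω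

theorem measureReal_le_eq_measureReal_lt {Y : Ω → ℝ} (hY : Measurable Y)
    (hY_ac : μ.map Y ≪ volume) (x : ℝ) : μ.real {ω | x ≤ Y ω} = μ.real {ω | x < Y ω} := by
  change μ.real (Y ⁻¹' Ici x) = μ.real (Y ⁻¹' Ioi x)
  rw [← map_measureReal_apply hY measurableSet_Ici, ← map_measureReal_apply hY measurableSet_Ioi,
    measureReal_congr (Ioi_ae_eq_Ici' (hY_ac (measure_singleton x))).symm]

end Survival

theorem integral_indicator_mul_hazard {Ω : Type*} {mΩ : MeasurableSpace Ω} {μ : Measure Ω}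
    [IsFiniteMeasure μ] {X Y : Ω → ℝ} (hX : Measurable X) (hY : Measurable Y)
    (hXY : IndepFun X Y μ) (hX_nonneg : ∀ ω, 0 ≤ X ω) {fX : ℝ → ℝ} (hfX : Measurable fX)
    (hfX_nonneg : ∀ x, 0 ≤ fX x)
    (hlaw : μ.map X = volume.withDensity (fun x => ENNReal.ofReal (fX x)))
    {s : Set (ℝ × ℝ)} (hs : MeasurableSet s) {g lam f : ℝ → ℝ} (hg : Measurable g)
    (hlam : Measurable lam) (hhaz : ∀ x, 0 ≤ x → lam x * μ.real {ω | (x, Y ω) ∈ s} = f x)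
    (hint : Integrable (fun ω => s.indicator (fun p => g p.1 * lam p.1) (X ω, Y ω)) μ) :
    ∫ ω, s.indicator (fun p => g p.1 * lam p.1) (X ω, Y ω) ∂μ = ∫ x, fX x * (g x * f x) := by
  have hX_ae : ∀ᵐ x ∂μ.map X, 0 ≤ x :=
    (ae_map_iff hX.aemeasurable measurableSet_Ici).mpr (ae_of_all _ hX_nonneg)
  rw [hXY.integral_indicator_comp_fst hX hY hs (g := fun x => g x * lam x) (hg.mul hlam) hint,
    integral_congr_ae (hX_ae.mono fun x hx => by rw [mul_assoc, hhaz x hx]), hlaw,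
    integral_withDensity_ofReal hfX hfX_nonneg]

section Censoring

variable {α : Type*} [LinearOrder α] (a b : α) (u v : α → ℝ)

theorem ite_le_mul_comp_min_eq_indicator :
    (if a ≤ b then (1 : ℝ) else 0) * u (min a b) * v (min a b)
      = {p : α × α | p.1 ≤ p.2}.indicator (fun p => u p.1 * v p.1) (a, b) := by
  by_cases h : a ≤ b <;> simp [h]

theorem one_sub_ite_le_mul_comp_min_eq_indicator :
    (1 - if a ≤ b then (1 : ℝ) else 0) * u (min a b) * v (min a b)
      = {p : α × α | p.1 < p.2}.indicator (fun p => u p.1 * v p.1) (b, a) := by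
  by_cases h : a ≤ b
  · simp [h]
  · simp [h, min_eq_right (le_of_not_ge h), lt_of_not_ge h]

end Censoring

theorem stein_operators_equiv_in_expectation_general {Ω : Type*} [MeasureSpace Ω]
    [IsProbabilityMeasure (ℙ : Measure Ω)]
    (X C : Ω → ℝ) (f0 fC S0 SC lam0 lamC w : ℝ → ℝ)
    (hXm : Measurable X) (hCm : Measurable C)
    (hindep : IndepFun X C ℙ)
    (hf0c : Continuous f0) (hfCc : Continuous fC)
    (hf0nn : ∀ x, 0 ≤ f0 x) (hfCnn : ∀ x, 0 ≤ fC x)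
    (hXnn : ∀ ω, 0 ≤ X ω) (hCnn : ∀ ω, 0 ≤ C ω)
    (hfX : Measure.map X ℙ = volume.withDensity (fun x => ENNReal.ofReal (f0 x)))
    (hfC : Measure.map C ℙ = volume.withDensity (fun x => ENNReal.ofReal (fC x)))
    (hS0 : ∀ s, S0 s = (ℙ {ω | s < X ω}).toReal)
    (hSC : ∀ s, SC s = (ℙ {ω | s < C ω}).toReal)
    (hS0pos : ∀ s, 0 ≤ s → 0 < S0 s) (hSCpos : ∀ s, 0 ≤ s → 0 < SC s)
    (hlam0 : ∀ x, lam0 x = f0 x / S0 x)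
    (hlamC : ∀ x, lamC x = fC x / SC x)
    (hwm : Measurable w)
    (hint1 : Integrable (fun ω => (if X ω ≤ C ω then (1:ℝ) else 0) *
      w (min (X ω) (C ω)) * lamC (min (X ω) (C ω))) ℙ)
    (hint2 : Integrable (fun ω => (1 - if X ω ≤ C ω then (1:ℝ) else 0) *
      w (min (X ω) (C ω)) * lam0 (min (X ω) (C ω))) ℙ) :
    ∫ ω, (if X ω ≤ C ω then (1:ℝ) else 0) *
        w (min (X ω) (C ω)) * lamC (min (X ω) (C ω)) ∂ℙ
      = ∫ ω, (1 - if X ω ≤ C ω then (1:ℝ) else 0) *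
        w (min (X ω) (C ω)) * lam0 (min (X ω) (C ω)) ∂ℙ := by
  have hlam0m : Measurable lam0 := funext hlam0 ▸
    hf0c.measurable.div (funext hS0 ▸ (antitone_measureReal_lt X).measurable)
  have hlamCm : Measurable lamC := funext hlamC ▸
    hfCc.measurable.div (funext hSC ▸ (antitone_measureReal_lt C).measurable)
  have hhaz0 (c : ℝ) (hc : 0 ≤ c) : lam0 c * Measure.real ℙ {ω | c < X ω} = f0 c := by
    rw [hlam0, measureReal_def, ← hS0, div_mul_cancel₀ _ (hS0pos c hc).ne']
  have hhazC (x : ℝ) (hx : 0 ≤ x) : lamC x * Measure.real ℙ {ω | x ≤ C ω} = fC x := by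
    rw [measureReal_le_eq_measureReal_lt hCm (hfC ▸ withDensity_absolutelyContinuous _ _),
      hlamC, measureReal_def, ← hSC, div_mul_cancel₀ _ (hSCpos x hx).ne']
  simp only [ite_le_mul_comp_min_eq_indicator, one_sub_ite_le_mul_comp_min_eq_indicator]
    at hint1 hint2 ⊢
  calc _ = ∫ x, f0 x * (w x * fC x) :=
        integral_indicator_mul_hazard hXm hCm hindep hXnn hf0c.measurable hf0nn hfX
          (measurableSet_le measurable_fst measurable_snd) hwm hlamCm hhazC hint1
    _ = ∫ x, fC x * (w x * f0 x) := by congr 1 with x; ring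
    _ = _ := (integral_indicator_mul_hazard hCm hXm hindep.symm hCnn hfCc.measurable hfCnn hfC
          (measurableSet_lt measurable_fst measurable_snd) hwm hlam0m hhaz0 hint2).symm

/-- Under the null, `E[Δ ω(T) λ_C(T)] = E[(1−Δ) ω(T) λ₀(T)]`. -/
theorem stein_operators_equiv_in_expectation {Ω : Type*} [MeasureSpace Ω]
    [IsProbabilityMeasure (ℙ : Measure Ω)]
    (X C : Ω → ℝ) (f0 fC S0 SC lam0 lamC w : ℝ → ℝ)
    (hXm : Measurable X) (hCm : Measurable C)
    (hindep : IndepFun X C ℙ)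
    (hf0c : Continuous f0) (hfCc : Continuous fC)
    (hf0nn : ∀ x, 0 ≤ f0 x) (hfCnn : ∀ x, 0 ≤ fC x)
    (hXnn : ∀ ω, 0 ≤ X ω) (hCnn : ∀ ω, 0 ≤ C ω)
    (hfX : Measure.map X ℙ = volume.withDensity (fun x => ENNReal.ofReal (f0 x)))
    (hfC : Measure.map C ℙ = volume.withDensity (fun x => ENNReal.ofReal (fC x)))
    (hS0 : ∀ s, S0 s = (ℙ {ω | s < X ω}).toReal)
    (hSC : ∀ s, SC s = (ℙ {ω | s < C ω}).toReal)
    (hS0pos : ∀ s, 0 ≤ s → 0 < S0 s) (hSCpos : ∀ s, 0 ≤ s → 0 < SC s)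
    (hlam0 : ∀ x, lam0 x = f0 x / S0 x)
    (hlamC : ∀ x, lamC x = fC x / SC x)
    (hwm : Measurable w) (M : ℝ) (hwb : ∀ x, |w x| ≤ M)
    (hint1 : Integrable (fun ω => (if X ω ≤ C ω then (1:ℝ) else 0) *
      w (min (X ω) (C ω)) * lamC (min (X ω) (C ω))) ℙ)
    (hint2 : Integrable (fun ω => (1 - if X ω ≤ C ω then (1:ℝ) else 0) *
      w (min (X ω) (C ω)) * lam0 (min (X ω) (C ω))) ℙ) :
    ∫ ω, (if X ω ≤ C ω then (1:ℝ) else 0) *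
        w (min (X ω) (C ω)) * lamC (min (X ω) (C ω)) ∂ℙ
      = ∫ ω, (1 - if X ω ≤ C ω then (1:ℝ) else 0) *
        w (min (X ω) (C ω)) * lam0 (min (X ω) (C ω)) ∂ℙ :=
  stein_operators_equiv_in_expectation_general X C f0 fC S0 SC lam0 lamC w hXm hCm hindep hf0c hfCc
    hf0nn hfCnn hXnn hCnn hfX hfC hS0 hSC hS0pos hSCpos hlam0 hlamC hwm hint1 hint2
end

section
/- Characterization for the martingale KSD: let α(x) = (1/λ_0(x) − 1/λ_X(x)) f_X(x) S_C(x). If the kernel K* (second mixed partial derivative of K) is c_0-universal (equivalently, integrally strictly positive definite for finite signed measures), and ∫∫ α(x) K*(x,y) α(y) dx dy = 0 with α integrable, then α ≡ 0 a.e.; moreover if S_C > 0 wherever f_X > 0, then λ_X = λ_0 a.e. on the support of f_X and hence f_X = f_0. -/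
open MeasureTheory Set

/-- Characterization for the martingale KSD: with
`α(x) = (1/λ₀(x) − 1/λ_X(x)) f_X(x) S_C(x)`, if `K*` is integrally strictly positive
definite and `∫∫ α K* α = 0` then `α = 0` a.e.; moreover, if `S_C > 0` wherever
`f_X > 0` then `λ_X = λ₀` a.e. on the support of `f_X` and `f_X = f₀` a.e. on `(0,∞)`. -/
theorem mksd_characterization (f0 fX S0 SX SC lam0 lamX : ℝ → ℝ) (K : ℝ → ℝ → ℝ)
    (hf0c : Continuous f0) (hfXc : Continuous fX)
    (hf0nn : ∀ x, 0 ≤ f0 x) (hfXnn : ∀ x, 0 ≤ fX x)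
    (hf0supp : ∀ x ≤ (0:ℝ), f0 x = 0) (hfXsupp : ∀ x ≤ (0:ℝ), fX x = 0)
    (hS0 : ∀ s, S0 s = ∫ t in Ioi s, f0 t)
    (hSX : ∀ s, SX s = ∫ t in Ioi s, fX t)
    (hf0dens : ∫ t in Ioi (0:ℝ), f0 t = 1)
    (hfXdens : ∫ t in Ioi (0:ℝ), fX t = 1)
    (hlam0 : ∀ x, lam0 x = f0 x / S0 x)
    (hlamX : ∀ x, lamX x = fX x / SX x)
    (hlam0pos : ∀ x > (0:ℝ), 0 < lam0 x) (hlamXpos : ∀ x > (0:ℝ), 0 < lamX x)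
    (hKcont : Continuous (fun p : ℝ × ℝ => K p.1 p.2))
    (MK : ℝ) (hKb : ∀ x y, |K x y| ≤ MK)
    (hKispd : ∀ g : ℝ → ℝ, Integrable g →
      (∫ x, ∫ y, g x * K x y * g y) = 0 → g =ᵐ[volume] 0)
    (hSCnn : ∀ x, 0 ≤ SC x)
    (hαint : Integrable (fun x => (1 / lam0 x - 1 / lamX x) * fX x * SC x))
    (hzero : (∫ x, ∫ y, ((1 / lam0 x - 1 / lamX x) * fX x * SC x) * K x y *
        ((1 / lam0 y - 1 / lamX y) * fX y * SC y)) = 0)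
    (hSCsupp : ∀ x, 0 < fX x → 0 < SC x) :
    ((fun x => (1 / lam0 x - 1 / lamX x) * fX x * SC x) =ᵐ[volume] 0) ∧
    (∀ᵐ x ∂volume, 0 < x → 0 < fX x → lamX x = lam0 x) ∧
    (fX =ᵐ[volume.restrict (Ioi 0)] f0) := by
  -- Part 1: α = 0 a.e.
  have hα0 : (fun x => (1 / lam0 x - 1 / lamX x) * fX x * SC x) =ᵐ[volume] 0 :=
    hKispd _ hαint hzero
  -- pointwise positivity facts
  have hfXpos : ∀ x > (0:ℝ), 0 < fX x ∧ 0 < SX x := by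
    intro x hx
    have h := hlamXpos x hx
    rw [hlamX] at h
    rcases div_pos_iff.mp h with ⟨h1, h2⟩ | ⟨h1, h2⟩
    · exact ⟨h1, h2⟩
    · linarith [hfXnn x]
  have hf0pos : ∀ x > (0:ℝ), 0 < f0 x ∧ 0 < S0 x := by
    intro x hx
    have h := hlam0pos x hx
    rw [hlam0] at h
    rcases div_pos_iff.mp h with ⟨h1, h2⟩ | ⟨h1, h2⟩
    · exact ⟨h1, h2⟩
    · linarith [hf0nn x]
  -- integrability of the densities
  have hfXint0 : IntegrableOn fX (Ioi 0) := by
    by_contra h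
    rw [integral_undef h] at hfXdens; norm_num at hfXdens
  have hf0int0 : IntegrableOn f0 (Ioi 0) := by
    by_contra h
    rw [integral_undef h] at hf0dens; norm_num at hf0dens
  have hfXint : Integrable fX := by
    rw [← integrableOn_univ, ← Set.Iic_union_Ioi (a := (0:ℝ))]
    exact ((integrableOn_zero).congr_fun
      (fun x hx => (hfXsupp x hx).symm) measurableSet_Iic).union hfXint0
  have hf0int : Integrable f0 := by
    rw [← integrableOn_univ, ← Set.Iic_union_Ioi (a := (0:ℝ))]
    exact ((integrableOn_zero).congr_fun
      (fun x hx => (hf0supp x hx).symm) measurableSet_Iic).union hf0int0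
  -- global positivity of survival functions
  have hS0pos : ∀ s, 0 < S0 s := by
    intro s
    rcases lt_or_ge (0:ℝ) s with hs | hs
    · exact (hf0pos s hs).2
    · have h1 : (1:ℝ) ≤ S0 s := by
        rw [hS0, ← hf0dens]
        exact setIntegral_mono_set hf0int.integrableOn
          (Filter.Eventually.of_forall fun x => hf0nn x)
          (HasSubset.Subset.eventuallyLE (Ioi_subset_Ioi hs))
      linarith
  have hSXpos : ∀ s, 0 < SX s := by
    intro s
    rcases lt_or_ge (0:ℝ) s with hs | hs
    · exact (hfXpos s hs).2
    · have h1 : (1:ℝ) ≤ SX s := by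
        rw [hSX, ← hfXdens]
        exact setIntegral_mono_set hfXint.integrableOn
          (Filter.Eventually.of_forall fun x => hfXnn x)
          (HasSubset.Subset.eventuallyLE (Ioi_subset_Ioi hs))
      linarith
  -- representation of survival functions and their derivatives
  have hrep : ∀ (f : ℝ → ℝ), Integrable f → ∀ s ≥ (-1:ℝ),
      (∫ t in Ioi s, f t) = (∫ t in Ioi (-1:ℝ), f t) - ∫ t in (-1:ℝ)..s, f t := by
    intro f hf s hs
    rw [intervalIntegral.integral_of_le (by linarith)]
    have hu : Ioc (-1:ℝ) s ∪ Ioi s = Ioi (-1:ℝ) := Ioc_union_Ioi_eq_Ioi hs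
    have hadd := setIntegral_union (Ioc_disjoint_Ioi le_rfl) measurableSet_Ioi
      (hf.integrableOn (s := Ioc (-1:ℝ) s)) (hf.integrableOn (s := Ioi s)) (μ := volume)
    rw [hu] at hadd
    linarith
  have hderiv : ∀ (f S : ℝ → ℝ), Continuous f → Integrable f →
      (∀ s, S s = ∫ t in Ioi s, f t) → ∀ s ≥ (0:ℝ), HasDerivAt S (-(f s)) s := by
    intro f S hc hi hSdef s hs
    have hG : HasDerivAt (fun u => ∫ t in (-1:ℝ)..u, f t) (f s) s :=
      intervalIntegral.integral_hasDerivAt_right hi.intervalIntegrable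
        hc.aestronglyMeasurable.stronglyMeasurableAtFilter hc.continuousAt
    have h2 : HasDerivAt (fun u => (∫ t in Ioi (-1:ℝ), f t) - ∫ t in (-1:ℝ)..u, f t)
        (-(f s)) s := hG.const_sub _
    refine h2.congr_of_eventuallyEq ?_
    filter_upwards [eventually_gt_nhds (show (-1:ℝ) < s by linarith)] with u hu
    rw [hSdef u, hrep f hi u hu.le]
  have hSXd : ∀ s ≥ (0:ℝ), HasDerivAt SX (-(fX s)) s := hderiv fX SX hfXc hfXint hSX
  have hS0d : ∀ s ≥ (0:ℝ), HasDerivAt S0 (-(f0 s)) s := hderiv f0 S0 hf0c hf0int hS0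
  -- key pointwise implication: α x = 0 and x > 0 imply lamX x = lam0 x
  have hkey : ∀ x, 0 < x → (1 / lam0 x - 1 / lamX x) * fX x * SC x = 0 →
      lamX x = lam0 x := by
    intro x hx hαx
    have hfx := (hfXpos x hx).1
    have hscx := hSCsupp x hfx
    have h1 : 1 / lam0 x - 1 / lamX x = 0 := by
      rcases mul_eq_zero.mp hαx with h | h
      · rcases mul_eq_zero.mp h with h' | h'
        · exact h'
        · exact absurd h' hfx.ne'
      · exact absurd h hscx.ne'
    have hl0 := hlam0pos x hx
    have hlX := hlamXpos x hx
    have : 1 / lam0 x = 1 / lamX x := by linarith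
    field_simp at this
    linarith
  -- W := fX * S0 - f0 * SX vanishes on (0, ∞)
  set W : ℝ → ℝ := fun x => fX x * S0 x - f0 x * SX x with hWdef
  have hWzero_of : ∀ x, 0 < x → lamX x = lam0 x → W x = 0 := by
    intro x hx hl
    rw [hlamX, hlam0] at hl
    have h := (div_eq_div_iff (hSXpos x).ne' (hS0pos x).ne').mp hl
    simp only [hWdef]
    linarith
  have hWcont : ContinuousOn W (Ici (0:ℝ)) := by
    intro x hx
    have hSXc : ContinuousAt SX x := (hSXd x hx).continuousAt
    have hS0c : ContinuousAt S0 x := (hS0d x hx).continuousAt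
    exact (((hfXc.continuousAt.mul hS0c).sub
      (hf0c.continuousAt.mul hSXc))).continuousWithinAt
  have hWae : W =ᵐ[volume.restrict (Ioi (0:ℝ))] 0 := by
    filter_upwards [ae_restrict_of_ae hα0, self_mem_ae_restrict measurableSet_Ioi]
      with x hx hx0
    exact hWzero_of x hx0 (hkey x hx0 hx)
  have hWeq : EqOn W 0 (Ioi (0:ℝ)) := by
    refine Measure.eqOn_of_ae_eq hWae (hWcont.mono Ioi_subset_Ici_self)
      continuousOn_const ?_
    rw [interior_Ioi]; exact subset_closure
  have hW : ∀ x ≥ (0:ℝ), W x = 0 := by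
    intro x hx
    rcases eq_or_lt_of_le hx with h | h
    · simp only [hWdef, hfXsupp 0 le_rfl, hf0supp 0 le_rfl, ← h]
      ring
    · exact hWeq h
  -- φ := SX / S0 is constant on [0, ∞)
  set φ : ℝ → ℝ := fun s => SX s / S0 s with hφdef
  have hφconst : ∀ b > (0:ℝ), φ b = φ 0 := by
    intro b hb
    have hcont : ContinuousOn φ (Icc 0 b) := by
      intro x hx
      exact (((hSXd x hx.1).continuousAt.div (hS0d x hx.1).continuousAt
        (hS0pos x).ne')).continuousWithinAt
    have hd : ∀ x ∈ Ico (0:ℝ) b, HasDerivWithinAt φ 0 (Ici x) x := by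
      intro x hx
      have h := ((hSXd x hx.1).div (hS0d x hx.1) (hS0pos x).ne')
      have hval : (-(fX x) * S0 x - SX x * -(f0 x)) / S0 x ^ 2 = 0 := by
        have := hW x hx.1
        simp only [hWdef] at this
        have hnum : -(fX x) * S0 x - SX x * -(f0 x) = -(fX x * S0 x - f0 x * SX x) := by
          ring
        rw [hnum, this, neg_zero, zero_div]
      rw [hval] at h
      exact h.hasDerivWithinAt
    exact constant_of_has_deriv_right_zero hcont hd b ⟨hb.le, le_rfl⟩
  have hSX0 : SX 0 = 1 := by rw [hSX]; exact hfXdens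
  have hS00 : S0 0 = 1 := by rw [hS0]; exact hf0dens
  have hSeq : ∀ b > (0:ℝ), SX b = S0 b := by
    intro b hb
    have h := hφconst b hb
    simp only [hφdef, hSX0, hS00] at h
    rw [div_eq_div_iff (hS0pos b).ne' (by norm_num : (1:ℝ) ≠ 0)] at h
    linarith [h]
  have hfeq : ∀ b > (0:ℝ), fX b = f0 b := by
    intro b hb
    have hw := hWeq (mem_Ioi.mpr hb)
    simp only [hWdef, Pi.zero_apply, hSeq b hb] at hw
    have := mul_right_cancel₀ (hS0pos b).ne' (by linarith : fX b * S0 b = f0 b * S0 b)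
    exact this
  refine ⟨hα0, ?_, ?_⟩
  · filter_upwards [hα0] with x hx hx0 _
    exact hkey x hx0 hx
  · filter_upwards [self_mem_ae_restrict measurableSet_Ioi] with x hx
    exact hfeq x hx
end
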